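/- arXiv:2410.14073 — 6 statements merged into one kernel-verified Lean document; each statement's English description precedes it below -/
import Mathlib

section
/- (Marsaglia–Bray polar method) Let D = {(u₁,u₂) ∈ ℝ² : 0 < u₁² + u₂² < 1} and let P be the uniform probability measure on D (Lebesgue measure on D normalized by its area). Define S(u₁,u₂) = (u₁·√(−2 ln w / w), u₂·√(−2 ln w / w)) where w = u₁² + u₂². Then the pushforward of P under S equals the product measure N(0,1) ⊗ N(0,1), i.e., the two output coordinates are independent standard Gaussian random variables. -/
/-!
The polar map is radial: `S u = h(|u|²) • u` with `h w = √(-2 log w / w)`. For any radial map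
the Jacobian determinant at `u` is the derivative of `w ↦ w h(w)²` at `w = |u|²`, and
`w h(w)² = |S u|²`. Here `w h(w)² = -2 log w`, so `S` maps the punctured unit disc bijectively
onto `ℝ² \ {0}` with `|det DS u| = 2 / |u|²`, while the product Gaussian density at `S u` is
`(2π)⁻¹ exp(log |u|²) = |u|² / (2π)`. By the change of variables formula the pushforward of
`π⁻¹ · Lebesgue` on the disc is therefore `N(0,1) ⊗ N(0,1)`; comparing total masses shows that the
disc has area `π`, so `π⁻¹ · Lebesgue` is the uniform measure.
-/

open MeasureTheory ProbabilityTheory Set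
open scoped ENNReal NNReal Real

noncomputable section

namespace PolarMethod

section RadialScale

variable {h : ℝ → ℝ}

def radialScale (h : ℝ → ℝ) (u : ℝ × ℝ) : ℝ × ℝ :=
  (u.1 * h (u.1 ^ 2 + u.2 ^ 2), u.2 * h (u.1 ^ 2 + u.2 ^ 2))

lemma measurable_radialScale (hh : Measurable h) : Measurable (radialScale h) := by
  unfold radialScale
  fun_prop

lemma radialScale_sq_add_sq (u : ℝ × ℝ) :
    (radialScale h u).1 ^ 2 + (radialScale h u).2 ^ 2 =
      (u.1 ^ 2 + u.2 ^ 2) * h (u.1 ^ 2 + u.2 ^ 2) ^ 2 := by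
  simp only [radialScale]
  ring

def radialScaleFDeriv (h : ℝ → ℝ) (u : ℝ × ℝ) : ℝ × ℝ →L[ℝ] ℝ × ℝ :=
  let c := h (u.1 ^ 2 + u.2 ^ 2)
  let k := 2 * deriv h (u.1 ^ 2 + u.2 ^ 2)
  LinearMap.toContinuousLinearMap
    (Matrix.toLin (Module.Basis.finTwoProd ℝ) (Module.Basis.finTwoProd ℝ)
      !![c + k * u.1 * u.1, k * u.1 * u.2; k * u.2 * u.1, c + k * u.2 * u.2])

lemma hasFDerivAt_radialScale {u : ℝ × ℝ} (hd : DifferentiableAt ℝ h (u.1 ^ 2 + u.2 ^ 2)) :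
    HasFDerivAt (radialScale h) (radialScaleFDeriv h u) u := by
  have hw : HasFDerivAt (fun u : ℝ × ℝ => u.1 ^ 2 + u.2 ^ 2) _ u :=
    (hasFDerivAt_fst.pow 2).add ((hasFDerivAt_snd (𝕜 := ℝ) (E := ℝ) (F := ℝ)).pow 2)
  have hc := hd.hasDerivAt.comp_hasFDerivAt u hw
  have hS : HasFDerivAt (radialScale h) _ u :=
    (hasFDerivAt_fst.mul hc).prodMk (hasFDerivAt_snd.mul hc)
  refine hS.congr_fderiv ?_
  rw [radialScaleFDeriv, Matrix.toLin_finTwoProd_toContinuousLinearMap]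
  ext <;>
  simp only [Nat.add_one_sub_one, pow_one, nsmul_eq_mul, Nat.cast_ofNat, smul_add,
    Function.comp_apply, ContinuousLinearMap.comp_apply, ContinuousLinearMap.inl_apply,
    ContinuousLinearMap.inr_apply, ContinuousLinearMap.prod_apply, add_apply,
    smul_apply, ContinuousLinearMap.coe_fst', ContinuousLinearMap.coe_snd',
    smul_eq_mul, mul_one, mul_zero, zero_add, add_zero] <;>
  ring

lemma det_radialScaleFDeriv (u : ℝ × ℝ) :
    (radialScaleFDeriv h u).det = h (u.1 ^ 2 + u.2 ^ 2) ^ 2 +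
      2 * (u.1 ^ 2 + u.2 ^ 2) * h (u.1 ^ 2 + u.2 ^ 2) * deriv h (u.1 ^ 2 + u.2 ^ 2) := by
  simp only [radialScaleFDeriv, LinearMap.det_toContinuousLinearMap, LinearMap.det_toLin,
    Matrix.det_fin_two_of]
  ring

lemma measurable_det_radialScaleFDeriv (hh : Measurable h) :
    Measurable fun u => (radialScaleFDeriv h u).det := by
  simp only [det_radialScaleFDeriv]
  have := measurable_deriv h
  fun_prop

lemma hasDerivAt_mul_sq_det_radialScaleFDeriv {u : ℝ × ℝ}
    (hd : DifferentiableAt ℝ h (u.1 ^ 2 + u.2 ^ 2)) :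
    HasDerivAt (fun w => w * h w ^ 2) (radialScaleFDeriv h u).det (u.1 ^ 2 + u.2 ^ 2) := by
  refine ((hasDerivAt_id' _).mul (hd.hasDerivAt.pow 2)).congr_deriv ?_
  rw [det_radialScaleFDeriv, Pi.pow_apply]
  push_cast
  ring

lemma injOn_radialScale {W : Set ℝ} (hpos : ∀ w ∈ W, 0 < h w)
    (hinj : InjOn (fun w => w * h w ^ 2) W) :
    InjOn (radialScale h) {u | u.1 ^ 2 + u.2 ^ 2 ∈ W} := by
  intro u hu v hv huv
  have hw : u.1 ^ 2 + u.2 ^ 2 = v.1 ^ 2 + v.2 ^ 2 := by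
    refine hinj hu hv ?_
    have := radialScale_sq_add_sq (h := h) u
    rw [huv, radialScale_sq_add_sq] at this
    exact this.symm
  simp only [radialScale, hw, Prod.mk.injEq] at huv
  have hv0 := (hpos _ hv).ne'
  exact Prod.ext (mul_right_cancel₀ hv0 huv.1) (mul_right_cancel₀ hv0 huv.2)

lemma image_radialScale {W : Set ℝ} (hpos : ∀ w ∈ W, 0 < h w)
    (himage : (fun w => w * h w ^ 2) '' W = Ioi 0) :
    radialScale h '' {u | u.1 ^ 2 + u.2 ^ 2 ∈ W} = {0}ᶜ := by
  ext x
  constructor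
  · rintro ⟨u, hu, rfl⟩ hx
    have hq : 0 < (u.1 ^ 2 + u.2 ^ 2) * h (u.1 ^ 2 + u.2 ^ 2) ^ 2 :=
      himage.subset (mem_image_of_mem _ hu)
    rw [← radialScale_sq_add_sq, hx] at hq
    simp at hq
  · intro hx
    have hq : 0 < x.1 ^ 2 + x.2 ^ 2 := by
      have : x.1 ≠ 0 ∨ x.2 ≠ 0 := by
        rw [← not_and_or]; exact fun h0 => hx (Prod.ext h0.1 h0.2)
      rcases this with h1 | h2 <;> positivity
    obtain ⟨w, hw, hwq⟩ := himage.symm.subset hq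
    simp only at hwq
    have hw0 : 0 < w := pos_of_mul_pos_left (hwq ▸ hq) (by positivity)
    set t := √(w / (x.1 ^ 2 + x.2 ^ 2))
    have ht : t ^ 2 * (x.1 ^ 2 + x.2 ^ 2) = w := by
      rw [Real.sq_sqrt (by positivity)]
      field_simp
    have hth : t * h w = 1 := by
      rw [← Real.sqrt_sq (hpos w hw).le, ← Real.sqrt_mul (by positivity), div_mul_eq_mul_div,
        hwq, div_self hq.ne', Real.sqrt_one]
    refine ⟨t • x, ?_, ?_⟩
    · simpa only [mem_ofPred_eq, Prod.smul_fst, Prod.smul_snd, smul_eq_mul, mul_pow, ← mul_add, ht]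
    · simp only [radialScale, Prod.smul_fst, Prod.smul_snd, smul_eq_mul, mul_pow, ← mul_add, ht]
      ext
      · linear_combination x.1 * hth
      · linear_combination x.2 * hth

end RadialScale

def polarFactor (w : ℝ) : ℝ := √(-2 * Real.log w / w)

lemma measurable_polarFactor : Measurable polarFactor := by
  unfold polarFactor
  fun_prop

lemma neg_two_mul_log_div_pos {w : ℝ} (hw : w ∈ Ioo 0 1) : 0 < -2 * Real.log w / w :=
  div_pos (by linarith [Real.log_neg hw.1 hw.2]) hw.1

lemma polarFactor_pos {w : ℝ} (hw : w ∈ Ioo 0 1) : 0 < polarFactor w :=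
  Real.sqrt_pos.2 (neg_two_mul_log_div_pos hw)

lemma mul_polarFactor_sq {w : ℝ} (h0 : 0 < w) (h1 : w ≤ 1) :
    w * polarFactor w ^ 2 = -2 * Real.log w := by
  rw [polarFactor, Real.sq_sqrt (div_nonneg (by linarith [Real.log_nonpos h0.le h1]) h0.le)]
  field_simp

lemma injOn_mul_polarFactor_sq : InjOn (fun w => w * polarFactor w ^ 2) (Ioo 0 1) := by
  intro v hv w hw hvw
  simp only [mul_polarFactor_sq hv.1 hv.2.le, mul_polarFactor_sq hw.1 hw.2.le] at hvw
  exact Real.log_injOn_pos hv.1 hw.1 (by linarith)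

lemma image_mul_polarFactor_sq : (fun w => w * polarFactor w ^ 2) '' Ioo 0 1 = Ioi 0 := by
  ext y
  constructor
  · rintro ⟨w, hw, rfl⟩
    simp only [mul_polarFactor_sq hw.1 hw.2.le, mem_Ioi]
    linarith [Real.log_neg hw.1 hw.2]
  · intro hy
    have hy' : -y / 2 < 0 := by linarith [mem_Ioi.1 hy]
    refine ⟨Real.exp (-y / 2), ⟨Real.exp_pos _, Real.exp_lt_one_iff.2 hy'⟩, ?_⟩
    show Real.exp (-y / 2) * polarFactor (Real.exp (-y / 2)) ^ 2 = y
    rw [mul_polarFactor_sq (Real.exp_pos _) (Real.exp_le_one_iff.2 hy'.le), Real.log_exp]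
    ring

lemma differentiableAt_polarFactor {w : ℝ} (hw : w ∈ Ioo 0 1) :
    DifferentiableAt ℝ polarFactor w :=
  (((Real.differentiableAt_log hw.1.ne').const_mul (-2)).div differentiableAt_id
    hw.1.ne').sqrt (neg_two_mul_log_div_pos hw).ne'

lemma det_radialScaleFDeriv_polarFactor {u : ℝ × ℝ} (hu : u.1 ^ 2 + u.2 ^ 2 ∈ Ioo 0 1) :
    (radialScaleFDeriv polarFactor u).det = -2 / (u.1 ^ 2 + u.2 ^ 2) := by
  have hlog : HasDerivAt (fun w => w * polarFactor w ^ 2) (-2 / (u.1 ^ 2 + u.2 ^ 2))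
      (u.1 ^ 2 + u.2 ^ 2) := by
    have := (Real.hasDerivAt_log hu.1.ne').const_mul (-2)
    refine (this.congr_deriv (by ring)).congr_of_eventuallyEq ?_
    filter_upwards [Ioo_mem_nhds hu.1 hu.2] with w hw
    exact mul_polarFactor_sq hw.1 hw.2.le
  exact (hasDerivAt_mul_sq_det_radialScaleFDeriv (differentiableAt_polarFactor hu)).unique hlog

lemma gaussianReal_prod_gaussianReal (μ₁ μ₂ : ℝ) {v₁ v₂ : ℝ≥0} (hv₁ : v₁ ≠ 0) (hv₂ : v₂ ≠ 0) :
    (gaussianReal μ₁ v₁).prod (gaussianReal μ₂ v₂) =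
      volume.withDensity (fun x : ℝ × ℝ => gaussianPDF μ₁ v₁ x.1 * gaussianPDF μ₂ v₂ x.2) := by
  rw [gaussianReal_of_var_ne_zero _ hv₁, gaussianReal_of_var_ne_zero _ hv₂,
    prod_withDensity (measurable_gaussianPDF _ _) (measurable_gaussianPDF _ _),
    Measure.volume_eq_prod]

lemma gaussianPDFReal_mul_gaussianPDFReal (a b : ℝ) :
    gaussianPDFReal 0 1 a * gaussianPDFReal 0 1 b =
      (2 * π)⁻¹ * Real.exp (-(a ^ 2 + b ^ 2) / 2) := by
  simp only [gaussianPDFReal, NNReal.coe_one, mul_one, sub_zero]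
  rw [show (-(a ^ 2 + b ^ 2) / 2) = -a ^ 2 / 2 + -b ^ 2 / 2 by ring, Real.exp_add]
  have h2π : (√(2 * π))⁻¹ ^ 2 = (2 * π)⁻¹ := by rw [inv_pow, Real.sq_sqrt (by positivity)]
  linear_combination (Real.exp (-a ^ 2 / 2) * Real.exp (-b ^ 2 / 2)) * h2π

lemma map_withDensity_comp {α β : Type*} [MeasurableSpace α] [MeasurableSpace β]
    (μ : Measure α) {f : α → β} (hf : Measurable f) {g : β → ℝ≥0∞} (hg : Measurable g) :
    (μ.withDensity (fun a => g (f a))).map f = (μ.map f).withDensity g := by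
  ext s hs
  rw [Measure.map_apply hf hs, withDensity_apply _ (hf hs), withDensity_apply _ hs,
    setLIntegral_map hs hg hf]

lemma inv_measure_univ_eq_of_map_smul_eq {α β : Type*} [MeasurableSpace α] [MeasurableSpace β]
    {μ : Measure α} {ν : Measure β} [IsProbabilityMeasure ν] {f : α → β} {c : ℝ≥0∞}
    (hf : Measurable f) (h : (c • μ).map f = ν) : (μ univ)⁻¹ = c := by
  have := congrArg (· univ) h
  simp only [Measure.map_apply hf MeasurableSet.univ, preimage_univ, Measure.smul_apply,
    smul_eq_mul, measure_univ] at this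
  exact (ENNReal.eq_inv_of_mul_eq_one_left this).symm

def puncturedDisk : Set (ℝ × ℝ) := {u | u.1 ^ 2 + u.2 ^ 2 ∈ Ioo 0 1}

lemma measurableSet_puncturedDisk : MeasurableSet puncturedDisk :=
  (by fun_prop : Measurable fun u : ℝ × ℝ => u.1 ^ 2 + u.2 ^ 2) measurableSet_Ioo

lemma abs_det_mul_gaussianPDF_polar {u : ℝ × ℝ} (hu : u ∈ puncturedDisk) :
    ENNReal.ofReal |(radialScaleFDeriv polarFactor u).det| *
      (gaussianPDF 0 1 (radialScale polarFactor u).1 *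
        gaussianPDF 0 1 (radialScale polarFactor u).2) = ENNReal.ofReal π⁻¹ := by
  have hsq : (radialScale polarFactor u).1 ^ 2 + (radialScale polarFactor u).2 ^ 2 =
      -2 * Real.log (u.1 ^ 2 + u.2 ^ 2) := by
    rw [radialScale_sq_add_sq, mul_polarFactor_sq hu.1 hu.2.le]
  rw [gaussianPDF, gaussianPDF, ← ENNReal.ofReal_mul (gaussianPDFReal_nonneg _ _ _),
    ← ENNReal.ofReal_mul (abs_nonneg _), gaussianPDFReal_mul_gaussianPDFReal, hsq,
    det_radialScaleFDeriv_polarFactor hu, abs_div, abs_neg, abs_two, abs_of_pos hu.1,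
    show -(-2 * Real.log (u.1 ^ 2 + u.2 ^ 2)) / 2 = Real.log (u.1 ^ 2 + u.2 ^ 2) by ring,
    Real.exp_log hu.1]
  congr 1
  field_simp [hu.1.ne']

theorem map_radialScale_polarFactor :
    (ENNReal.ofReal π⁻¹ • volume.restrict puncturedDisk).map (radialScale polarFactor) =
      (gaussianReal 0 1).prod (gaussianReal 0 1) := by
  have hS := measurable_radialScale measurable_polarFactor
  have hG : Measurable fun x : ℝ × ℝ => gaussianPDF 0 1 x.1 * gaussianPDF 0 1 x.2 := by
    have := measurable_gaussianPDF 0 1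
    fun_prop
  have hJ : Measurable fun u => ENNReal.ofReal |(radialScaleFDeriv polarFactor u).det| :=
    ENNReal.measurable_ofReal.comp (measurable_det_radialScaleFDeriv measurable_polarFactor).abs
  have hchange := map_withDensity_abs_det_fderiv_eq_addHaar volume
    measurableSet_puncturedDisk.nullMeasurableSet
    (fun u hu => (hasFDerivAt_radialScale (differentiableAt_polarFactor hu)).hasFDerivWithinAt)
    (injOn_radialScale (fun _ => polarFactor_pos) injOn_mul_polarFactor_sq)
  have himage : radialScale polarFactor '' puncturedDisk = {0}ᶜ :=
    image_radialScale (fun _ => polarFactor_pos) image_mul_polarFactor_sq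
  rw [himage, restrict_compl_singleton] at hchange
  calc (ENNReal.ofReal π⁻¹ • volume.restrict puncturedDisk).map (radialScale polarFactor)
      = ((volume.restrict puncturedDisk).withDensity
          ((fun u => ENNReal.ofReal |(radialScaleFDeriv polarFactor u).det|) *
            fun u => gaussianPDF 0 1 (radialScale polarFactor u).1 *
              gaussianPDF 0 1 (radialScale polarFactor u).2)).map (radialScale polarFactor) := by
        rw [← withDensity_const]
        congr 1
        refine withDensity_congr_ae ?_
        filter_upwards [ae_restrict_mem measurableSet_puncturedDisk] with u hu
        exact (abs_det_mul_gaussianPDF_polar hu).symm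
    _ = volume.withDensity fun x : ℝ × ℝ => gaussianPDF 0 1 x.1 * gaussianPDF 0 1 x.2 := by
        have hGS : Measurable fun u => gaussianPDF 0 1 (radialScale polarFactor u).1 *
            gaussianPDF 0 1 (radialScale polarFactor u).2 := hG.comp hS
        rw [withDensity_mul _ hJ hGS, map_withDensity_comp _ hS hG, hchange]
    _ = (gaussianReal 0 1).prod (gaussianReal 0 1) :=
        (gaussianReal_prod_gaussianReal 0 0 one_ne_zero one_ne_zero).symm

end PolarMethod

end

open PolarMethod in
/-- The Marsaglia–Bray polar method: let `D = {(u₁,u₂) : 0 < u₁² + u₂² < 1}` and let the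
uniform probability measure on `D` be Lebesgue measure restricted to `D` normalized by
its total mass.  Then the pushforward of this uniform measure under
`(u₁,u₂) ↦ (u₁·√(−2 ln w / w), u₂·√(−2 ln w / w))` with `w = u₁² + u₂²` is the product
of two standard Gaussian measures `N(0,1) ⊗ N(0,1)`. -/
theorem stmt_3 :
    let D : Set (ℝ × ℝ) := {u | 0 < u.1 ^ 2 + u.2 ^ 2 ∧ u.1 ^ 2 + u.2 ^ 2 < 1}
    Measure.map (fun u : ℝ × ℝ =>
        (u.1 * Real.sqrt (-2 * Real.log (u.1 ^ 2 + u.2 ^ 2) / (u.1 ^ 2 + u.2 ^ 2)),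
         u.2 * Real.sqrt (-2 * Real.log (u.1 ^ 2 + u.2 ^ 2) / (u.1 ^ 2 + u.2 ^ 2))))
      ((volume D)⁻¹ • volume.restrict D) =
      (gaussianReal 0 1).prod (gaussianReal 0 1) := by
  intro D
  have hvol : (volume puncturedDisk)⁻¹ = ENNReal.ofReal π⁻¹ := by
    simpa only [Measure.restrict_apply_univ] using inv_measure_univ_eq_of_map_smul_eq
      (measurable_radialScale measurable_polarFactor) map_radialScale_polarFactor
  change ((volume puncturedDisk)⁻¹ • volume.restrict puncturedDisk).map
    (radialScale polarFactor) = _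
  rw [hvol]
  exact map_radialScale_polarFactor
end

section
/- (Ratio of uniforms method) Let h : ℝ → [0,∞) be measurable with 0 < ∫_ℝ h(x) dx < ∞, and let C_h = {(u,v) ∈ ℝ² : 0 < u and u² ≤ h(v/u)}. Then: (a) the two-dimensional Lebesgue measure of C_h equals (1/2)·∫_ℝ h(x) dx (in particular C_h has finite positive area); and (b) if (U,V) is uniformly distributed on C_h, then X = V/U has probability density h(x)/∫_ℝ h, i.e., the pushforward of the normalized uniform measure on C_h under the map (u,v) ↦ v/u equals the probability measure on ℝ with density x ↦ h(x)/∫_ℝ h with respect to Lebesgue measure. -/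
open MeasureTheory Set

lemma lint_Ioc (a : ℝ) (ha : 0 ≤ a) :
    ∫⁻ u in Ioc (0:ℝ) a, ENNReal.ofReal u = ENNReal.ofReal (a^2/2) := by
  rw [← ofReal_integral_eq_lintegral_ofReal]
  · rw [← intervalIntegral.integral_of_le ha, integral_id]; norm_num
  · exact continuous_id.integrableOn_Ioc
  · exact ae_restrict_of_forall_mem measurableSet_Ioc (fun x hx => hx.1.le)

lemma key (h : ℝ → ℝ) (hm : Measurable h) (hnn : ∀ x, 0 ≤ h x)
    (A : Set ℝ) (hA : MeasurableSet A) :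
    volume {p : ℝ × ℝ | (0 < p.1 ∧ p.1 ^ 2 ≤ h (p.2 / p.1)) ∧ p.2 / p.1 ∈ A} =
      ∫⁻ x in A, ENNReal.ofReal (h x / 2) := by
  have hdiv : Measurable fun p : ℝ × ℝ => p.2 / p.1 :=
    measurable_snd.div measurable_fst
  have hSmeas : MeasurableSet {p : ℝ × ℝ | (0 < p.1 ∧ p.1 ^ 2 ≤ h (p.2 / p.1)) ∧ p.2 / p.1 ∈ A} := by
    apply MeasurableSet.inter
    · exact ((measurableSet_lt measurable_const measurable_fst).inter
        (measurableSet_le (measurable_fst.pow_const 2) (hm.comp hdiv)))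
    · exact hdiv hA
  set D : Set (ℝ × ℝ) := {q | 0 < q.1 ∧ q.1 ^ 2 ≤ h q.2 ∧ q.2 ∈ A} with hD
  have hDmeas : MeasurableSet D :=
    (measurableSet_lt measurable_const measurable_fst).inter
      ((measurableSet_le (measurable_fst.pow_const 2) (hm.comp measurable_snd)).inter
        (measurable_snd hA))
  have hG : Measurable (D.indicator fun q : ℝ × ℝ => ENNReal.ofReal q.1) :=
    (ENNReal.measurable_ofReal.comp measurable_fst).indicator hDmeas
  rw [Measure.volume_eq_prod, Measure.prod_apply hSmeas]
  have slice : ∀ u : ℝ, volume (Prod.mk u ⁻¹' {p : ℝ × ℝ | (0 < p.1 ∧ p.1 ^ 2 ≤ h (p.2 / p.1)) ∧ p.2 / p.1 ∈ A})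
      = ∫⁻ x, D.indicator (fun q : ℝ × ℝ => ENNReal.ofReal q.1) (u, x) := by
    intro u
    rcases le_or_gt u 0 with hu | hu
    · have e1 : Prod.mk u ⁻¹' {p : ℝ × ℝ | (0 < p.1 ∧ p.1 ^ 2 ≤ h (p.2 / p.1)) ∧ p.2 / p.1 ∈ A} = ∅ := by
        ext v; simp only [mem_preimage, mem_setOf_eq, mem_empty_iff_false, iff_false]
        rintro ⟨⟨h1, _⟩, _⟩; exact absurd h1 (not_lt.2 hu)
      have e2 : ∀ x : ℝ, D.indicator (fun q : ℝ × ℝ => ENNReal.ofReal q.1) (u, x) = 0 := by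
        intro x
        apply indicator_of_notMem
        rintro ⟨h1, _⟩; exact absurd h1 (not_lt.2 hu)
      simp [e1, e2]
    · set B : Set ℝ := {x | u ^ 2 ≤ h x ∧ x ∈ A} with hB
      have hBmeas : MeasurableSet B := (measurableSet_le measurable_const hm).inter hA
      have e1 : Prod.mk u ⁻¹' {p : ℝ × ℝ | (0 < p.1 ∧ p.1 ^ 2 ≤ h (p.2 / p.1)) ∧ p.2 / p.1 ∈ A}
          = (fun v => u⁻¹ * v) ⁻¹' B := by
        ext v
        simp only [mem_preimage, mem_setOf_eq, hB]
        rw [inv_mul_eq_div]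
        tauto
      rw [e1, ← Measure.map_apply (measurable_const_mul _) hBmeas,
        Real.map_volume_mul_left (inv_ne_zero hu.ne')]
      have e3 : ∀ x : ℝ, D.indicator (fun q : ℝ × ℝ => ENNReal.ofReal q.1) (u, x)
          = B.indicator (fun _ => ENNReal.ofReal u) x := by
        intro x
        by_cases hx : x ∈ B
        · rw [indicator_of_mem hx, indicator_of_mem]
          exact ⟨hu, hx.1, hx.2⟩
        · rw [indicator_of_notMem hx, indicator_of_notMem]
          rintro ⟨_, h2, h3⟩; exact hx ⟨h2, h3⟩
      simp only [e3]
      rw [lintegral_indicator hBmeas _, setLIntegral_const, Measure.smul_apply,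
        smul_eq_mul, inv_inv, abs_of_pos hu]
  simp only [slice]
  rw [lintegral_lintegral_swap (f := fun u x => D.indicator (fun q : ℝ × ℝ => ENNReal.ofReal q.1) (u, x)) (by exact hG.aemeasurable)]
  have inner : ∀ x : ℝ, (∫⁻ u, D.indicator (fun q : ℝ × ℝ => ENNReal.ofReal q.1) (u, x))
      = A.indicator (fun x => ENNReal.ofReal (h x / 2)) x := by
    intro x
    by_cases hx : x ∈ A
    · have e4 : ∀ u : ℝ, D.indicator (fun q : ℝ × ℝ => ENNReal.ofReal q.1) (u, x)
          = (Ioc (0:ℝ) (Real.sqrt (h x))).indicator (fun u => ENNReal.ofReal u) u := by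
        intro u
        have hmem : (u, x) ∈ D ↔ u ∈ Ioc (0:ℝ) (Real.sqrt (h x)) := by
          simp only [hD, mem_setOf_eq, mem_Ioc]
          constructor
          · rintro ⟨h1, h2, _⟩
            exact ⟨h1, (Real.le_sqrt h1.le (hnn x)).2 h2⟩
          · rintro ⟨h1, h2⟩
            exact ⟨h1, (Real.le_sqrt h1.le (hnn x)).1 h2, hx⟩
        by_cases hu : (u, x) ∈ D
        · rw [indicator_of_mem hu, indicator_of_mem (hmem.1 hu)]
        · rw [indicator_of_notMem hu, indicator_of_notMem (fun c => hu (hmem.2 c))]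
      simp only [e4]
      rw [lintegral_indicator measurableSet_Ioc _, lint_Ioc _ (Real.sqrt_nonneg _),
        Real.sq_sqrt (hnn x), indicator_of_mem hx]
    · rw [indicator_of_notMem hx]
      have : ∀ u : ℝ, D.indicator (fun q : ℝ × ℝ => ENNReal.ofReal q.1) (u, x) = 0 := by
        intro u
        apply indicator_of_notMem
        rintro ⟨_, _, h3⟩; exact hx h3
      simp [this]
  simp only [inner]
  rw [lintegral_indicator hA _]

/-- The ratio of uniforms method: let `h : ℝ → [0,∞)` be measurable with finite positive
integral and let `C_h = {(u,v) : 0 < u ∧ u² ≤ h (v/u)}`.  Then (a) the Lebesgue measure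
of `C_h` equals `(1/2)·∫ h`; and (b) the pushforward of the uniform probability measure on
`C_h` (restricted Lebesgue measure, normalized) under `(u,v) ↦ v/u` is the probability
measure with density `x ↦ h x / ∫ h` with respect to Lebesgue measure. -/
theorem stmt_5 (h : ℝ → ℝ) (hm : Measurable h) (hnn : ∀ x, 0 ≤ h x)
    (hint : Integrable h) (hpos : 0 < ∫ x, h x) :
    let C : Set (ℝ × ℝ) := {p | 0 < p.1 ∧ p.1 ^ 2 ≤ h (p.2 / p.1)}
    volume C = ENNReal.ofReal ((1 / 2) * ∫ x, h x) ∧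
      Measure.map (fun p : ℝ × ℝ => p.2 / p.1) ((volume C)⁻¹ • volume.restrict C) =
        volume.withDensity (fun x => ENNReal.ofReal (h x / ∫ y, h y)) := by
  intro C
  set I : ℝ := ∫ x, h x with hI
  have hdiv : Measurable fun p : ℝ × ℝ => p.2 / p.1 :=
    measurable_snd.div measurable_fst
  have hCmeas : MeasurableSet C :=
    (measurableSet_lt measurable_const measurable_fst).inter
      (measurableSet_le (measurable_fst.pow_const 2) (hm.comp hdiv))
  have ha : volume C = ENNReal.ofReal ((1 / 2) * I) := by
    have e : C = {p : ℝ × ℝ | (0 < p.1 ∧ p.1 ^ 2 ≤ h (p.2 / p.1)) ∧ p.2 / p.1 ∈ univ} := by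
      ext p; simp [C]
    rw [e, key h hm hnn univ MeasurableSet.univ, Measure.restrict_univ,
      ← ofReal_integral_eq_lintegral_ofReal (hint.div_const 2)
        (Filter.Eventually.of_forall fun x => div_nonneg (hnn x) two_pos.le)]
    congr 1
    rw [integral_div]
    ring
  refine ⟨ha, ?_⟩
  have hIne : I ≠ 0 := hpos.ne'
  ext s hs
  rw [Measure.map_apply hdiv hs, Measure.smul_apply, smul_eq_mul,
    Measure.restrict_apply (hdiv hs), withDensity_apply _ hs]
  have e2 : (fun p : ℝ × ℝ => p.2 / p.1) ⁻¹' s ∩ C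
      = {p : ℝ × ℝ | (0 < p.1 ∧ p.1 ^ 2 ≤ h (p.2 / p.1)) ∧ p.2 / p.1 ∈ s} := by
    ext p; simp only [mem_inter_iff, mem_preimage, mem_setOf_eq, C]; tauto
  rw [e2, key h hm hnn s hs, ha]
  have hc : (ENNReal.ofReal ((1 / 2) * I))⁻¹ = ENNReal.ofReal (2 / I) := by
    rw [← ENNReal.ofReal_inv_of_pos (by positivity)]
    congr 1
    field_simp
  rw [hc, ← lintegral_const_mul _ (by measurability)]
  congr 1
  ext x
  rw [← ENNReal.ofReal_mul (by positivity)]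
  congr 1
  field_simp
end

section
/- (Shuster's chi-squared transformation of the inverse Gaussian distribution) Let λ, μ > 0 and let X be a random variable with the inverse Gaussian IG(λ,μ) density f(x) = √(λ/(2π x³)) · exp(−λ(x−μ)²/(2μ²x)) on (0,∞). Then Y = λ(X−μ)²/(μ²X) follows the chi-squared distribution with one degree of freedom; that is, the pushforward of the IG(λ,μ) measure under x ↦ λ(x−μ)²/(μ²x) is the Gamma(1/2, 1/2) distribution, with density y ↦ (2πy)^(−1/2) e^(−y/2) on (0,∞). -/
/-!
Write `g x = λ(x - μ)² / (μ² x)` and `f` for the `IG(λ, μ)` density. The reciprocal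
substitution `x ↦ μ² / x` swaps `(0, μ]` and `[μ, ∞)`, preserves `g`, and turns `f x dx` into
`(x / μ) f x dx`, so the `IG` mass of `g⁻¹' s` is the integral of `(1 + x / μ) f x` over
`(μ, ∞) ∩ g⁻¹' s`. On `(μ, ∞)` the map `g` is a bijection onto `(0, ∞)` with
`(1 + x / μ) f x = g' x · χ²₁(g x)`, and the substitution `y = g x` turns that integral into the
`χ²₁` mass of `s`.
-/

open MeasureTheory ProbabilityTheory Set Filter

lemma hasDerivAt_const_div (c : ℝ) {x : ℝ} (hx : x ≠ 0) :
    HasDerivAt (fun y => c / y) (-(c / x ^ 2)) x :=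
  ((hasDerivAt_const x c).div (hasDerivAt_id x) hx).congr_deriv (by simp only [id]; ring)

lemma involutive_const_div {c : ℝ} (hc : c ≠ 0) : Function.Involutive fun x : ℝ => c / x :=
  fun _ => div_div_cancel₀ hc

lemma ProbabilityTheory.setLIntegral_gammaPDF_eq_Ioi_inter (a r : ℝ) (s : Set ℝ) :
    ∫⁻ y in s, gammaPDF a r y = ∫⁻ y in Ioi 0 ∩ s, gammaPDF a r y := by
  have hsupp : (Ici 0).indicator (gammaPDF a r) = gammaPDF a r :=
    indicator_eq_self.2 fun y hy => not_lt.1 fun hneg => hy (gammaPDF_of_neg hneg)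
  rw [setLIntegral_congr (μ := volume) (Ioi_ae_eq_Ici.inter (.refl _ s)),
    ← Measure.restrict_restrict measurableSet_Ici, ← lintegral_indicator measurableSet_Ici,
    hsupp]

lemma ProbabilityTheory.gammaPDFReal_half_half {y : ℝ} (hy : 0 < y) :
    gammaPDFReal (1 / 2) (1 / 2) y = Real.sqrt (1 / (2 * Real.pi * y)) * Real.exp (-(y / 2)) := by
  rw [gammaPDFReal, if_pos hy.le, Real.Gamma_one_half_eq,
    show (1 : ℝ) / 2 - 1 = -(1 / 2) by norm_num, Real.rpow_neg hy.le, ← Real.sqrt_eq_rpow,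
    ← Real.sqrt_eq_rpow, one_div_mul_eq_div,
    show 1 / (2 * Real.pi * y) = (1 / 2) * (Real.pi⁻¹ * y⁻¹) by field_simp,
    Real.sqrt_mul (by norm_num), Real.sqrt_mul (by positivity), Real.sqrt_inv, Real.sqrt_inv]
  field_simp

namespace InverseGaussian

noncomputable def pdfReal (lam mu x : ℝ) : ℝ :=
  Real.sqrt (lam / (2 * Real.pi * x ^ 3)) * Real.exp (-(lam * (x - mu) ^ 2) / (2 * mu ^ 2 * x))

noncomputable def shusterMap (lam mu x : ℝ) : ℝ := lam * (x - mu) ^ 2 / (mu ^ 2 * x)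

variable {lam mu x : ℝ}

lemma measurable_shusterMap : Measurable (shusterMap lam mu) := by
  unfold shusterMap
  fun_prop

-- No hypothesis `x ≠ 0`: at `x = 0` both sides are `0` since `a / 0 = 0`.
lemma shusterMap_sq_div (hmu : mu ≠ 0) (x : ℝ) :
    shusterMap lam mu (mu ^ 2 / x) = shusterMap lam mu x := by
  rcases eq_or_ne x 0 with rfl | hx
  · simp [shusterMap]
  · unfold shusterMap
    field_simp
    ring

lemma hasDerivAt_shusterMap (hmu : mu ≠ 0) (hx : x ≠ 0) :
    HasDerivAt (shusterMap lam mu) (lam * (x ^ 2 - mu ^ 2) / (mu ^ 2 * x ^ 2)) x := by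
  have h := (((hasDerivAt_id x).sub_const mu).pow 2 |>.const_mul lam).div
    ((hasDerivAt_id x).const_mul (mu ^ 2)) (mul_ne_zero (pow_ne_zero 2 hmu) hx)
  refine h.congr_deriv ?_
  simp only [id, Pi.pow_apply]
  field_simp
  ring

lemma shusterMap_pos (hlam : 0 < lam) (hmu : 0 < mu) (hx : mu < x) :
    0 < shusterMap lam mu x := by
  have : 0 < x := hmu.trans hx
  have : 0 < x - mu := sub_pos.2 hx
  unfold shusterMap
  positivity

lemma injOn_shusterMap (hlam : lam ≠ 0) (hmu : 0 < mu) : InjOn (shusterMap lam mu) (Ioi mu) := by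
  intro x hx y hy hxy
  have : 0 < x := hmu.trans hx
  have : 0 < y := hmu.trans hy
  have hfactor : (x - y) * (x * y - mu ^ 2) = 0 := by
    unfold shusterMap at hxy
    field_simp at hxy
    linear_combination hxy
  have : x * y - mu ^ 2 ≠ 0 := by nlinarith [mem_Ioi.1 hx, mem_Ioi.1 hy]
  exact sub_eq_zero.1 ((mul_eq_zero.1 hfactor).resolve_right this)

lemma tendsto_shusterMap_atTop (hlam : 0 < lam) (hmu : 0 < mu) :
    Tendsto (shusterMap lam mu) atTop atTop := by
  have hlin : Tendsto (fun x => lam / mu ^ 2 * (x - 2 * mu)) atTop atTop :=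
    (tendsto_id.atTop_add tendsto_const_nhds).const_mul_atTop (by positivity)
  refine tendsto_atTop_mono' _ ?_ hlin
  filter_upwards [eventually_gt_atTop 0] with x hx
  have hsplit : shusterMap lam mu x = lam / mu ^ 2 * (x - 2 * mu) + lam / x := by
    unfold shusterMap
    field_simp
    ring
  have : 0 < lam / x := by positivity
  linarith

lemma image_shusterMap_Ioi (hlam : 0 < lam) (hmu : 0 < mu) :
    shusterMap lam mu '' Ioi mu = Ioi 0 := by
  refine Subset.antisymm (image_subset_iff.2 fun x hx => shusterMap_pos hlam hmu hx) ?_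
  have hcont : ContinuousOn (shusterMap lam mu) (Ici mu) := by
    refine ContinuousOn.div (by fun_prop) (by fun_prop) fun x hx => ?_
    have : 0 < x := hmu.trans_le hx
    positivity
  have hmu0 : shusterMap lam mu mu = 0 := by simp [shusterMap]
  rw [← hmu0]
  exact intermediate_value_Ioi hcont (tendsto_shusterMap_atTop hlam hmu)

lemma preimage_sq_div_Ici (hmu : 0 < mu) :
    (fun x : ℝ => mu ^ 2 / x) ⁻¹' Ici mu = Ioc 0 mu := by
  ext x
  simp only [mem_preimage, mem_Ici, mem_Ioc]
  refine ⟨fun h => ?_, fun ⟨hx0, hxmu⟩ => ?_⟩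
  · have hx0 : 0 < x := by
      by_contra! hx
      exact (div_nonpos_of_nonneg_of_nonpos (sq_nonneg mu) hx).not_gt (hmu.trans_le h)
    exact ⟨hx0, by nlinarith [(le_div_iff₀ hx0).1 h]⟩
  · rw [le_div_iff₀ hx0]
    nlinarith

lemma image_sq_div_Ici_inter_preimage (hmu : 0 < mu) (s : Set ℝ) :
    (fun x => mu ^ 2 / x) '' (Ici mu ∩ shusterMap lam mu ⁻¹' s) =
      Ioc 0 mu ∩ shusterMap lam mu ⁻¹' s := by
  rw [(involutive_const_div (pow_ne_zero 2 hmu.ne')).image_eq_preimage_symm, preimage_inter,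
    preimage_sq_div_Ici hmu, preimage_preimage]
  simp only [shusterMap_sq_div hmu.ne']

lemma pdfReal_eq (x : ℝ) :
    pdfReal lam mu x =
      Real.sqrt (lam / (2 * Real.pi * x ^ 3)) * Real.exp (-(shusterMap lam mu x / 2)) := by
  rw [pdfReal, shusterMap]
  ring_nf

@[fun_prop]
lemma measurable_pdfReal : Measurable (pdfReal lam mu) := by
  unfold pdfReal
  fun_prop

lemma pdfReal_nonneg : 0 ≤ pdfReal lam mu x := by
  unfold pdfReal
  positivity

lemma sq_div_sq_mul_pdfReal_sq_div (hmu : 0 < mu) (hx : 0 < x) :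
    mu ^ 2 / x ^ 2 * pdfReal lam mu (mu ^ 2 / x) = x / mu * pdfReal lam mu x := by
  simp only [pdfReal_eq, shusterMap_sq_div hmu.ne', ← mul_assoc]
  congr 1
  rw [← Real.sqrt_sq (by positivity : 0 ≤ mu ^ 2 / x ^ 2),
    ← Real.sqrt_sq (by positivity : 0 ≤ x / mu), ← Real.sqrt_mul (sq_nonneg _),
    ← Real.sqrt_mul (sq_nonneg _)]
  congr 1
  field_simp

lemma one_add_div_mul_pdfReal (hlam : 0 < lam) (hmu : 0 < mu) (hx : mu < x) :
    (1 + x / mu) * pdfReal lam mu x =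
      lam * (x ^ 2 - mu ^ 2) / (mu ^ 2 * x ^ 2) *
        gammaPDFReal (1 / 2) (1 / 2) (shusterMap lam mu x) := by
  have : 0 < x := hmu.trans hx
  have : x - mu ≠ 0 := (sub_pos.2 hx).ne'
  have : 0 < x ^ 2 - mu ^ 2 := by nlinarith
  rw [gammaPDFReal_half_half (shusterMap_pos hlam hmu hx), pdfReal_eq, ← mul_assoc, ← mul_assoc]
  congr 1
  rw [← Real.sqrt_sq (by positivity : 0 ≤ 1 + x / mu),
    ← Real.sqrt_sq (by positivity : 0 ≤ lam * (x ^ 2 - mu ^ 2) / (mu ^ 2 * x ^ 2)),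
    ← Real.sqrt_mul (sq_nonneg _), ← Real.sqrt_mul (sq_nonneg _)]
  congr 1
  unfold shusterMap
  field_simp
  ring

lemma setLIntegral_Ioc_pdfReal_eq_Ioi (hmu : 0 < mu) {s : Set ℝ} (hs : MeasurableSet s) :
    ∫⁻ x in Ioc 0 mu ∩ shusterMap lam mu ⁻¹' s, ENNReal.ofReal (pdfReal lam mu x) =
      ∫⁻ x in Ioi mu ∩ shusterMap lam mu ⁻¹' s,
        ENNReal.ofReal (x / mu * pdfReal lam mu x) := by
  have hmeas : MeasurableSet (Ici mu ∩ shusterMap lam mu ⁻¹' s) :=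
    measurableSet_Ici.inter (measurable_shusterMap hs)
  rw [← image_sq_div_Ici_inter_preimage hmu s,
    lintegral_image_eq_lintegral_abs_deriv_mul hmeas
      (fun x hx => (hasDerivAt_const_div _ (hmu.trans_le hx.1).ne').hasDerivWithinAt)
      (involutive_const_div (pow_ne_zero 2 hmu.ne')).injective.injOn,
    setLIntegral_congr (μ := volume) (Ioi_ae_eq_Ici.inter (.refl _ (shusterMap lam mu ⁻¹' s)))]
  refine setLIntegral_congr_fun hmeas fun x hx => ?_
  have hx0 : 0 < x := hmu.trans_le hx.1
  rw [← ENNReal.ofReal_mul (abs_nonneg _), abs_neg, abs_of_nonneg (by positivity),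
    sq_div_sq_mul_pdfReal_sq_div hmu hx0]

lemma setLIntegral_Ioi_one_add_div_mul_pdfReal (hlam : 0 < lam) (hmu : 0 < mu) {s : Set ℝ}
    (hs : MeasurableSet s) :
    ∫⁻ x in Ioi mu ∩ shusterMap lam mu ⁻¹' s,
        ENNReal.ofReal ((1 + x / mu) * pdfReal lam mu x) =
      ∫⁻ y in Ioi 0 ∩ s, gammaPDF (1 / 2) (1 / 2) y := by
  have hmeas : MeasurableSet (Ioi mu ∩ shusterMap lam mu ⁻¹' s) :=
    measurableSet_Ioi.inter (measurable_shusterMap hs)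
  rw [← image_shusterMap_Ioi hlam hmu, ← image_inter_preimage,
    lintegral_image_eq_lintegral_abs_deriv_mul hmeas
      (fun x hx => (hasDerivAt_shusterMap hmu.ne' (hmu.trans hx.1).ne').hasDerivWithinAt)
      ((injOn_shusterMap hlam.ne' hmu).mono inter_subset_left)]
  refine setLIntegral_congr_fun hmeas fun x hx => ?_
  have : 0 < x := hmu.trans hx.1
  have : 0 < x ^ 2 - mu ^ 2 := by nlinarith [mem_Ioi.1 hx.1]
  rw [one_add_div_mul_pdfReal hlam hmu hx.1, ENNReal.ofReal_mul (by positivity),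
    abs_of_pos (by positivity), gammaPDF]

lemma setLIntegral_pdfReal_preimage_shusterMap (hlam : 0 < lam) (hmu : 0 < mu) {s : Set ℝ}
    (hs : MeasurableSet s) :
    ∫⁻ x in Ioi 0 ∩ shusterMap lam mu ⁻¹' s, ENNReal.ofReal (pdfReal lam mu x) =
      ∫⁻ y in Ioi 0 ∩ s, gammaPDF (1 / 2) (1 / 2) y := by
  have hpre : MeasurableSet (shusterMap lam mu ⁻¹' s) := measurable_shusterMap hs
  rw [← setLIntegral_Ioi_one_add_div_mul_pdfReal hlam hmu hs, ← Ioc_union_Ioi_eq_Ioi hmu.le,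
    union_inter_distrib_right,
    lintegral_union (measurableSet_Ioi.inter hpre)
      (Ioc_disjoint_Ioi_same.mono inter_subset_left inter_subset_left),
    setLIntegral_Ioc_pdfReal_eq_Ioi hmu hs, ← lintegral_add_left (by fun_prop)]
  refine setLIntegral_congr_fun (measurableSet_Ioi.inter hpre) fun x hx => ?_
  have : 0 < x := hmu.trans hx.1
  rw [← ENNReal.ofReal_add (mul_nonneg (by positivity) pdfReal_nonneg) pdfReal_nonneg, add_mul,
    one_mul, add_comm]

end InverseGaussian

open InverseGaussian

/-- Shuster's chi-squared transformation of the inverse Gaussian distribution: if `X`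
has the inverse Gaussian `IG(λ,μ)` law, with density
`x ↦ √(λ/(2πx³))·exp(−λ(x−μ)²/(2μ²x))` on `(0,∞)`, then `Y = λ(X−μ)²/(μ²X)` is
chi-squared with one degree of freedom, i.e., the pushforward of the `IG(λ,μ)` measure
under `x ↦ λ(x−μ)²/(μ²x)` is the `Gamma(1/2, 1/2)` distribution. -/
theorem stmt_7 (lam mu : ℝ) (hlam : 0 < lam) (hmu : 0 < mu) :
    Measure.map (fun x : ℝ => lam * (x - mu) ^ 2 / (mu ^ 2 * x))
      (volume.withDensity (fun x => ENNReal.ofReal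
        (Set.indicator (Ioi (0:ℝ))
          (fun x => Real.sqrt (lam / (2 * Real.pi * x ^ 3)) *
            Real.exp (-(lam * (x - mu) ^ 2) / (2 * mu ^ 2 * x))) x))) =
      gammaMeasure (1 / 2) (1 / 2) := by
  change Measure.map (shusterMap lam mu)
    (volume.withDensity (ENNReal.ofReal ∘ (Ioi 0).indicator (pdfReal lam mu))) = _
  ext s hs
  rw [Measure.map_apply measurable_shusterMap hs, gammaMeasure, withDensity_apply _ hs,
    withDensity_apply _ (measurable_shusterMap hs), ← indicator_comp_of_zero ENNReal.ofReal_zero,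
    lintegral_indicator measurableSet_Ioi, Measure.restrict_restrict measurableSet_Ioi,
    setLIntegral_gammaPDF_eq_Ioi_inter]
  exact setLIntegral_pdfReal_preimage_shusterMap hlam hmu hs
end

section
/- (Kanter's representation of the positive stable distribution) Let 0 < α < 2 and define Zolotarev's kernel A(u) = [sin((α/2)u)]^(α/2) · [sin((1−α/2)u)]^(1−α/2) / sin(u) for u ∈ (0,π). Let W be exponentially distributed with rate 1 and U uniformly distributed on (0,π), independent of W. Then for every p > 0, P( (A(U)/W)^((2−α)/α) ≤ p ) = (1/π) ∫_0^π exp(−p^(−α/(2−α)) A(u)) du; that is, (A(U)/W)^((2−α)/α) has the CDF F_P(p|α) = (1/π)∫_0^π exp(−p^(−α/(2−α)) A(u)) du of the positive stable distribution S(α/2, 1, [cos(πα/4)]^(2/α), 0). -/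
/-!
Condition on `U`: if `W ∼ Exp(1)` is independent of `U`, then `P(t(U) ≤ W) = E[exp(-t(U))]`
for any measurable `t > 0`. Since Zolotarev's kernel is positive on `(0, π)` and `W > 0` a.s.,
the event `(A(U)/W)^(1/β) ≤ p`, `β = α/(2-α)`, is a.s. the event `p^(-β) A(U) ≤ W`, so its
probability is the average of `exp(-p^(-β) A)` over `(0, π)`.
-/

open MeasureTheory ProbabilityTheory Set Real

noncomputable section

def zolotarevKernel (α u : ℝ) : ℝ :=
  sin (α / 2 * u) ^ (α / 2) * sin ((1 - α / 2) * u) ^ (1 - α / 2) / sin u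

lemma sin_mul_pos_of_mem_Ioo {c u : ℝ} (hc₀ : 0 < c) (hc₁ : c ≤ 1) (hu : u ∈ Ioo 0 π) :
    0 < sin (c * u) :=
  sin_pos_of_pos_of_lt_pi (mul_pos hc₀ hu.1) <|
    (mul_le_of_le_one_left hu.1.le hc₁).trans_lt hu.2

lemma zolotarevKernel_pos {α u : ℝ} (hα : 0 < α ∧ α < 2) (hu : u ∈ Ioo 0 π) :
    0 < zolotarevKernel α u := by
  obtain ⟨hα₀, hα₂⟩ := hα
  have h₁ := sin_mul_pos_of_mem_Ioo (c := α / 2) (by positivity) (by linarith) hu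
  have h₂ := sin_mul_pos_of_mem_Ioo (c := 1 - α / 2) (by linarith) (by linarith) hu
  have h₃ := sin_pos_of_pos_of_lt_pi hu.1 hu.2
  unfold zolotarevKernel
  positivity

@[fun_prop]
lemma measurable_zolotarevKernel (α : ℝ) : Measurable (zolotarevKernel α) := by
  unfold zolotarevKernel; fun_prop

lemma div_rpow_inv_le_iff {a w p β : ℝ} (ha : 0 < a) (hw : 0 < w) (hp : 0 < p) (hβ : 0 < β) :
    (a / w) ^ β⁻¹ ≤ p ↔ p ^ (-β) * a ≤ w := by
  rw [rpow_inv_le_iff_of_pos (div_pos ha hw).le hp.le hβ, rpow_neg hp.le, div_le_iff₀ hw,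
    inv_mul_le_iff₀ (rpow_pos_of_pos hp β)]

def standardExponential : Measure ℝ :=
  volume.withDensity fun w => ENNReal.ofReal ((Ioi 0).indicator (fun w => exp (-w)) w)

lemma ae_pos_standardExponential : ∀ᵐ w ∂standardExponential, 0 < w := by
  rw [standardExponential, ae_withDensity_iff
    ((Measurable.indicator (by fun_prop) measurableSet_Ioi).ennreal_ofReal)]
  refine ae_of_all _ fun w hw => ?_
  by_contra hw₀
  exact hw (by rw [indicator_of_notMem (show w ∉ Ioi 0 from hw₀), ENNReal.ofReal_zero])

lemma standardExponential_Ici {c : ℝ} (hc : 0 < c) :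
    standardExponential (Ici c) = ENNReal.ofReal (exp (-c)) := by
  have hdensity : EqOn (fun w => ENNReal.ofReal ((Ioi 0).indicator (fun w => exp (-w)) w))
      (fun w => ENNReal.ofReal (exp (-w))) (Ici c) := fun w hw => by
    simp only [indicator_of_mem (show w ∈ Ioi 0 from hc.trans_le hw)]
  have hint : IntegrableOn (fun w => exp (-w)) (Ici c) := by
    rw [integrableOn_Ici_iff_integrableOn_Ioi]
    simpa using exp_neg_integrableOn_Ioi c one_pos
  rw [standardExponential, withDensity_apply _ measurableSet_Ici,
    setLIntegral_congr_fun measurableSet_Ici hdensity,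
    ← ofReal_integral_eq_lintegral_ofReal hint (ae_of_all _ fun w => (exp_pos _).le),
    integral_Ici_eq_integral_Ioi, integral_exp_neg_Ioi]

section Independence

variable {Ω α : Type*} [MeasurableSpace Ω] [MeasurableSpace α] {μ : Measure Ω}
  [IsFiniteMeasure μ] {X : Ω → α} {Y : Ω → ℝ} {t : α → ℝ}

lemma measure_le_eq_lintegral_of_indepFun (hX : Measurable X) (hY : Measurable Y)
    (hXY : IndepFun X Y μ) (ht : Measurable t) :
    μ {ω | t (X ω) ≤ Y ω} = ∫⁻ x, μ.map Y (Ici (t x)) ∂μ.map X := by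
  have hS : MeasurableSet {q : α × ℝ | t q.1 ≤ q.2} :=
    measurableSet_le (ht.comp measurable_fst) measurable_snd
  rw [show {ω | t (X ω) ≤ Y ω} = (fun ω => (X ω, Y ω)) ⁻¹' {q | t q.1 ≤ q.2} from rfl,
    ← Measure.map_apply (hX.prodMk hY) hS,
    (indepFun_iff_map_prod_eq_prod_map_map hX.aemeasurable hY.aemeasurable).1 hXY,
    Measure.prod_apply hS]
  rfl

lemma measure_le_eq_lintegral_of_indepFun_standardExponential (hX : Measurable X)
    (hY : Measurable Y) (hXY : IndepFun X Y μ) (hYlaw : μ.map Y = standardExponential)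
    (ht : Measurable t) (ht_pos : ∀ᵐ x ∂μ.map X, 0 < t x) :
    μ {ω | t (X ω) ≤ Y ω} = ∫⁻ x, ENNReal.ofReal (exp (-t x)) ∂μ.map X := by
  rw [measure_le_eq_lintegral_of_indepFun hX hY hXY ht, hYlaw]
  refine lintegral_congr_ae ?_
  filter_upwards [ht_pos] with x hx using standardExponential_Ici hx

end Independence

lemma lintegral_ofReal_inv_smul {β : Type*} [MeasurableSpace β] {μ : Measure β} {c : ℝ}
    (hc : 0 < c) {f : β → ℝ} (hf : Integrable f μ) (hf₀ : 0 ≤ᵐ[μ] f) :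
    ∫⁻ x, ENNReal.ofReal (f x) ∂(ENNReal.ofReal c)⁻¹ • μ =
      ENNReal.ofReal (1 / c * ∫ x, f x ∂μ) := by
  rw [lintegral_smul_measure, ← ofReal_integral_eq_lintegral_ofReal hf hf₀,
    ENNReal.ofReal_mul (by positivity), one_div, ENNReal.ofReal_inv_of_pos hc, smul_eq_mul]

end

/-- Kanter's representation of the positive stable distribution: with Zolotarev's kernel
`A(u) = [sin((α/2)u)]^{α/2}·[sin((1−α/2)u)]^{1−α/2}/sin(u)` on `(0,π)`, if `W ∼ Exp(1)`
and `U ∼ Uniform(0,π)` are independent, then for every `p > 0`,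
`P((A(U)/W)^{(2−α)/α} ≤ p) = (1/π)·∫₀^π exp(−p^{−α/(2−α)}·A(u)) du`. -/
theorem stmt_10 {Ω : Type*} [MeasureSpace Ω] [IsProbabilityMeasure (ℙ : Measure Ω)]
    (α : ℝ) (hα : 0 < α ∧ α < 2)
    (A : ℝ → ℝ)
    (hA : ∀ u ∈ Ioo 0 Real.pi, A u =
      Real.sin (α / 2 * u) ^ (α / 2) * Real.sin ((1 - α / 2) * u) ^ (1 - α / 2)
        / Real.sin u)
    (W U : Ω → ℝ) (hWm : Measurable W) (hUm : Measurable U)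
    (hindep : IndepFun W U ℙ)
    (hW : Measure.map W ℙ = volume.withDensity (fun w => ENNReal.ofReal
      (Set.indicator (Ioi (0:ℝ)) (fun w => Real.exp (-w)) w)))
    (hU : Measure.map U ℙ = (ENNReal.ofReal Real.pi)⁻¹ • volume.restrict (Ioo 0 Real.pi)) :
    ∀ p : ℝ, 0 < p →
      ℙ {ω | (A (U ω) / W ω) ^ ((2 - α) / α) ≤ p} =
        ENNReal.ofReal ((1 / Real.pi) *
          ∫ u in Ioo 0 Real.pi, Real.exp (-(p ^ (-(α / (2 - α))) * A u))) := by
  intro p hp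
  have hA_kernel : ∀ u ∈ Ioo 0 π, A u = zolotarevKernel α u := hA
  set t : ℝ → ℝ := fun u => p ^ (-(α / (2 - α))) * zolotarevKernel α u
  have ht_pos : ∀ u ∈ Ioo 0 π, 0 < t u := fun u hu =>
    mul_pos (rpow_pos_of_pos hp _) (zolotarevKernel_pos hα hu)
  have hU_mem : ∀ᵐ u ∂Measure.map U ℙ, u ∈ Ioo 0 π := by
    rw [hU]; exact Measure.ae_smul_measure (ae_restrict_mem measurableSet_Ioo) _
  have hW_pos : ∀ᵐ ω ∂ℙ, 0 < W ω :=
    ae_of_ae_map hWm.aemeasurable (hW ▸ ae_pos_standardExponential)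
  have hevent : {ω | (A (U ω) / W ω) ^ ((2 - α) / α) ≤ p} =ᵐ[ℙ] {ω | t (U ω) ≤ W ω} := by
    rw [Filter.eventuallyEq_set]
    filter_upwards [ae_of_ae_map hUm.aemeasurable hU_mem, hW_pos] with ω hu hw
    rw [hA_kernel _ hu, ← inv_div α]
    exact div_rpow_inv_le_iff (zolotarevKernel_pos hα hu) hw hp (div_pos hα.1 (by linarith))
  have hintegrand : EqOn (fun u => exp (-t u)) (fun u => exp (-(p ^ (-(α / (2 - α))) * A u)))
      (Ioo 0 π) := fun u hu => by simp only [t, hA_kernel u hu]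
  have hint : IntegrableOn (fun u => exp (-t u)) (Ioo 0 π) :=
    Measure.integrableOn_of_bounded (M := 1) measure_Ioo_lt_top.ne (by fun_prop) <|
      (ae_restrict_iff' measurableSet_Ioo).2 <| ae_of_all _ fun u hu => by
        rw [norm_of_nonneg (exp_pos _).le, exp_le_one_iff, neg_nonpos]
        exact (ht_pos u hu).le
  rw [measure_congr hevent, measure_le_eq_lintegral_of_indepFun_standardExponential hUm hWm
      hindep.symm hW (by fun_prop) (hU_mem.mono ht_pos), hU,
    lintegral_ofReal_inv_smul pi_pos hint (ae_of_all _ fun u => (exp_pos _).le),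
    setIntegral_congr_fun measurableSet_Ioo hintegrand]
end

section
/- (First moment of the truncated Student's t distribution) Let ν > 2, μ ∈ ℝ, σ > 0 and a < b be real numbers. Let t(x|m,s²,ν) = Γ((ν+1)/2)/(√(νπ)·Γ(ν/2)·s) · [1 + ((x−m)/s)²/ν]^(−(ν+1)/2) denote the Student's t density with location m, scale s and ν degrees of freedom, and T(x|m,s²,ν) its CDF. Set σ_ν = σ·√(ν/(ν−2)). Then ∫_a^b x·t(x|μ,σ²,ν) dx = σ_ν·[t((a−μ)/σ_ν | 0, 1, ν−2) − t((b−μ)/σ_ν | 0, 1, ν−2)] + μ·[T(b|μ,σ²,ν) − T(a|μ,σ²,ν)]. Consequently, E(X | a < X < b) = σ_ν·[t((a−μ)/σ_ν|0,1,ν−2) − t((b−μ)/σ_ν|0,1,ν−2)]/(T(b|μ,σ²,ν) − T(a|μ,σ²,ν)) + μ. -/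
/-!
Write `g(x) = 1 + ((x - μ)/σ)²/ν`, so that `t(x|μ,σ²,ν) = C_ν(σ) g(x)^(-(ν+1)/2)` for a constant
`C_ν(σ)`. Then `(x - μ) t(x|μ,σ²,ν)` is the derivative of `-(σ²ν/(ν-1)) C_ν(σ) g(x)^(-(ν-1)/2)`, and
the rescaling by `σ_ν` turns `g` into the kernel `1 + y²/(ν-2)` of the `ν - 2` density, while
`Γ(z + 1) = z Γ(z)` matches the constants; so this antiderivative is `-σ_ν t((x - μ)/σ_ν|0,1,ν-2)`.
Splitting `x = (x - μ) + μ` gives the first moment, and the mass `T(b) - T(a)` is positive.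
-/

open MeasureTheory Set Real

noncomputable def studentTConst (df s : ℝ) : ℝ :=
  Gamma ((df + 1) / 2) / (√(df * π) * Gamma (df / 2) * s)

noncomputable def studentTPDF (m s df x : ℝ) : ℝ :=
  studentTConst df s * (1 + ((x - m) / s) ^ 2 / df) ^ (-((df + 1) / 2))

section StudentT

variable {m s df : ℝ}

lemma studentTConst_pos (hdf : 0 < df) (hs : 0 < s) : 0 < studentTConst df s := by
  have h₁ := Gamma_pos_of_pos (by linarith : 0 < (df + 1) / 2)
  have h₂ := Gamma_pos_of_pos (by linarith : 0 < df / 2)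
  unfold studentTConst
  positivity

lemma studentTPDF_pos (hdf : 0 < df) (hs : 0 < s) (x : ℝ) : 0 < studentTPDF m s df x :=
  mul_pos (studentTConst_pos hdf hs) (rpow_pos_of_pos (by positivity) _)

lemma continuous_studentTPDF (hdf : 0 < df) : Continuous (studentTPDF m s df) :=
  continuous_const.mul <| (by fun_prop : Continuous fun x => 1 + ((x - m) / s) ^ 2 / df).rpow_const
    fun _ => Or.inl (by positivity)

lemma integrable_studentTPDF (hdf : 0 < df) (hs : 0 < s) : Integrable (studentTPDF m s df) := by
  have hstd : Integrable fun y : ℝ => (1 + y ^ 2) ^ (-((df + 1) / 2)) := by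
    refine (integrable_rpow_neg_one_add_norm_sq (E := ℝ) (μ := volume) (r := df + 1)
      (by simp; linarith)).congr (.of_forall fun y => ?_)
    simp only [Real.norm_eq_abs, sq_abs, neg_div]
  refine (((hstd.comp_div (by positivity : s * √df ≠ 0)).comp_sub_right m).const_mul
    (studentTConst df s)).congr (.of_forall fun x => ?_)
  simp only [studentTPDF]
  rw [div_pow, div_pow, mul_pow, sq_sqrt hdf.le, div_div]

lemma integral_Iic_sub_integral_Iic_studentTPDF (hdf : 0 < df) (hs : 0 < s) {a b : ℝ}
    (hab : a ≤ b) :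
    (∫ x in Iic b, studentTPDF m s df x) - ∫ x in Iic a, studentTPDF m s df x =
      ∫ x in Ioo a b, studentTPDF m s df x := by
  have hint := integrable_studentTPDF (m := m) hdf hs
  rw [intervalIntegral.integral_Iic_sub_Iic hint.integrableOn hint.integrableOn,
    intervalIntegral.integral_of_le hab, integral_Ioc_eq_integral_Ioo]

lemma integral_Ioo_studentTPDF_pos (hdf : 0 < df) (hs : 0 < s) {a b : ℝ} (hab : a < b) :
    0 < ∫ x in Ioo a b, studentTPDF m s df x := by
  rw [← integral_Ioc_eq_integral_Ioo, ← intervalIntegral.integral_of_le hab.le]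
  exact intervalIntegral.intervalIntegral_pos_of_pos_on
    ((continuous_studentTPDF hdf).intervalIntegrable a b) (fun x _ => studentTPDF_pos hdf hs x) hab

end StudentT

noncomputable def studentTStdDev (s ν : ℝ) : ℝ := s * √(ν / (ν - 2))

section Moment

variable {m s ν : ℝ}

lemma studentTStdDev_sq (hν : 2 < ν) : studentTStdDev s ν ^ 2 = s ^ 2 * ν / (ν - 2) := by
  rw [studentTStdDev, mul_pow, sq_sqrt (div_nonneg (by linarith) (by linarith))]
  ring

lemma studentTStdDev_mul_studentTConst_sub_two (hν : 2 < ν) (hs : s ≠ 0) :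
    studentTStdDev s ν * studentTConst (ν - 2) 1 = s ^ 2 * ν / (ν - 1) * studentTConst ν s := by
  have hν₀ : 0 < ν := by linarith
  have hν₂ : 0 < ν - 2 := by linarith
  have hΓ₁ : Gamma ((ν + 1) / 2) = (ν - 1) / 2 * Gamma ((ν - 1) / 2) := by
    rw [show (ν + 1) / 2 = (ν - 1) / 2 + 1 by ring, Gamma_add_one (by linarith)]
  have hΓ₂ : Gamma (ν / 2) = (ν - 2) / 2 * Gamma ((ν - 2) / 2) := by
    rw [show ν / 2 = (ν - 2) / 2 + 1 by ring, Gamma_add_one (by linarith)]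
  have hΓ₂_pos := Gamma_pos_of_pos (by linarith : 0 < (ν - 2) / 2)
  have hsqrtν := mul_self_sqrt hν₀.le
  have hsqrtν₂ := mul_self_sqrt hν₂.le
  have : √ν ≠ 0 := by positivity
  have : √(ν - 2) ≠ 0 := by positivity
  have : ν - 1 ≠ 0 := by linarith
  rw [studentTStdDev, studentTConst, studentTConst, hΓ₁, hΓ₂, show ν - 2 + 1 = ν - 1 by ring,
    sqrt_div hν₀.le, sqrt_mul hν₀.le, sqrt_mul hν₂.le]
  field_simp
  linear_combination Gamma ((ν - 1) / 2) * ((ν - 2) * hsqrtν - ν * hsqrtν₂)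

lemma studentTStdDev_mul_studentTPDF_sub_two (hν : 2 < ν) (hs : s ≠ 0) (x : ℝ) :
    studentTStdDev s ν * studentTPDF 0 1 (ν - 2) ((x - m) / studentTStdDev s ν) =
      s ^ 2 * ν / (ν - 1) * studentTConst ν s * (1 + ((x - m) / s) ^ 2 / ν) ^ (-((ν - 1) / 2)) := by
  have hσν : studentTStdDev s ν ≠ 0 := by
    rw [← sq_pos_iff, studentTStdDev_sq hν]
    have : 0 < ν - 2 := by linarith
    positivity
  have hbase : (((x - m) / studentTStdDev s ν - 0) / 1) ^ 2 / (ν - 2) = ((x - m) / s) ^ 2 / ν := by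
    have : ν - 2 ≠ 0 := by linarith
    have : ν ≠ 0 := by linarith
    rw [sub_zero, div_one, div_pow, div_pow, studentTStdDev_sq hν]
    field_simp
  rw [studentTPDF, hbase, show ν - 2 + 1 = ν - 1 by ring, ← mul_assoc,
    studentTStdDev_mul_studentTConst_sub_two hν hs]

lemma hasDerivAt_studentTStdDev_mul_studentTPDF_sub_two (hν : 2 < ν) (hs : s ≠ 0) (x : ℝ) :
    HasDerivAt
      (fun x => -(studentTStdDev s ν * studentTPDF 0 1 (ν - 2) ((x - m) / studentTStdDev s ν)))
      ((x - m) * studentTPDF m s ν x) x := by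
  have hν₁ : ν - 1 ≠ 0 := by linarith
  have hν₀ : 0 < ν := by linarith
  have hg_pos : 0 < 1 + ((x - m) / s) ^ 2 / ν := by positivity
  simp only [studentTStdDev_mul_studentTPDF_sub_two hν hs]
  have hderiv : HasDerivAt (fun x => 1 + ((x - m) / s) ^ 2 / ν) (2 * (x - m) / (s ^ 2 * ν)) x := by
    refine (((((hasDerivAt_id x).sub_const m).div_const s).pow 2).div_const ν |>.const_add 1)
      |>.congr_deriv ?_
    simp only [id, Nat.cast_ofNat, Nat.add_one_sub_one, pow_one]
    field_simp
  refine ((hderiv.rpow_const (p := -((ν - 1) / 2)) (.inl hg_pos.ne')).const_mul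
    (s ^ 2 * ν / (ν - 1) * studentTConst ν s)).neg.congr_deriv ?_
  rw [studentTPDF, show -((ν - 1) / 2) - 1 = -((ν + 1) / 2) by ring]
  field_simp

lemma integral_Ioo_sub_mul_studentTPDF (hν : 2 < ν) (hs : s ≠ 0) {a b : ℝ} (hab : a ≤ b) :
    ∫ x in Ioo a b, (x - m) * studentTPDF m s ν x =
      studentTStdDev s ν * (studentTPDF 0 1 (ν - 2) ((a - m) / studentTStdDev s ν) -
        studentTPDF 0 1 (ν - 2) ((b - m) / studentTStdDev s ν)) := by
  have hcont : Continuous fun x => (x - m) * studentTPDF m s ν x :=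
    (continuous_id.sub continuous_const).mul (continuous_studentTPDF (by linarith))
  rw [← integral_Ioc_eq_integral_Ioo, ← intervalIntegral.integral_of_le hab,
    intervalIntegral.integral_eq_sub_of_hasDerivAt
      (fun x _ => hasDerivAt_studentTStdDev_mul_studentTPDF_sub_two hν hs x)
      (hcont.intervalIntegrable a b)]
  ring

lemma integral_Ioo_mul_studentTPDF (hν : 2 < ν) (hs : 0 < s) {a b : ℝ} (hab : a ≤ b) :
    ∫ x in Ioo a b, x * studentTPDF m s ν x =
      studentTStdDev s ν * (studentTPDF 0 1 (ν - 2) ((a - m) / studentTStdDev s ν) -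
        studentTPDF 0 1 (ν - 2) ((b - m) / studentTStdDev s ν)) +
        m * ∫ x in Ioo a b, studentTPDF m s ν x := by
  have hint := integrable_studentTPDF (m := m) (df := ν) (by linarith) hs
  have hcentered : IntegrableOn (fun x => (x - m) * studentTPDF m s ν x) (Ioo a b) :=
    ((continuous_id.sub continuous_const).mul (continuous_studentTPDF (by linarith))
      |>.integrableOn_Icc).mono_set Ioo_subset_Icc_self
  calc ∫ x in Ioo a b, x * studentTPDF m s ν x
      = ∫ x in Ioo a b, ((x - m) * studentTPDF m s ν x + m * studentTPDF m s ν x) := by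
        congr 1 with x; ring
    _ = _ := by
      rw [integral_add hcentered (hint.const_mul m).integrableOn, integral_const_mul,
        integral_Ioo_sub_mul_studentTPDF hν hs.ne' hab]

end Moment

/-- First moment of the truncated Student's t distribution: let `t(·|m,s²,df)` denote the
Student's t density with location `m`, scale `s` and `df` degrees of freedom, `T` its CDF,
and `σ_ν = σ·√(ν/(ν−2))` for `ν > 2`.  Then
`∫_a^b x·t(x|μ,σ²,ν) dx = σ_ν·[t((a−μ)/σ_ν|0,1,ν−2) − t((b−μ)/σ_ν|0,1,ν−2)]
+ μ·[T(b|μ,σ²,ν) − T(a|μ,σ²,ν)]`, and consequently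
`E(X | a < X < b) = σ_ν·[t((a−μ)/σ_ν|0,1,ν−2) − t((b−μ)/σ_ν|0,1,ν−2)]
/ (T(b|μ,σ²,ν) − T(a|μ,σ²,ν)) + μ`. -/
theorem stmt_15 (ν μ σ a b : ℝ) (hν : 2 < ν) (hσ : 0 < σ) (hab : a < b) :
    let td : ℝ → ℝ → ℝ → ℝ → ℝ := fun m s df x =>
      Real.Gamma ((df + 1) / 2) /
          (Real.sqrt (df * Real.pi) * Real.Gamma (df / 2) * s) *
        (1 + ((x - m) / s) ^ 2 / df) ^ (-((df + 1) / 2))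
    let T : ℝ → ℝ → ℝ → ℝ → ℝ := fun m s df x => ∫ u in Iic x, td m s df u
    let σν := σ * Real.sqrt (ν / (ν - 2))
    (∫ x in Ioo a b, x * td μ σ ν x) =
      σν * (td 0 1 (ν - 2) ((a - μ) / σν) - td 0 1 (ν - 2) ((b - μ) / σν)) +
        μ * (T μ σ ν b - T μ σ ν a) ∧
    (∫ x in Ioo a b, x * td μ σ ν x) / (∫ x in Ioo a b, td μ σ ν x) =
      σν * (td 0 1 (ν - 2) ((a - μ) / σν) - td 0 1 (ν - 2) ((b - μ) / σν)) /
          (T μ σ ν b - T μ σ ν a) + μ := by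
  intro td T σν
  have hcdf : T μ σ ν b - T μ σ ν a = ∫ x in Ioo a b, td μ σ ν x :=
    integral_Iic_sub_integral_Iic_studentTPDF (by linarith) hσ hab.le
  have hmass : 0 < ∫ x in Ioo a b, td μ σ ν x := integral_Ioo_studentTPDF_pos (by linarith) hσ hab
  have hmoment : (∫ x in Ioo a b, x * td μ σ ν x) =
      σν * (td 0 1 (ν - 2) ((a - μ) / σν) - td 0 1 (ν - 2) ((b - μ) / σν)) +
        μ * ∫ x in Ioo a b, td μ σ ν x :=
    integral_Ioo_mul_studentTPDF hν hσ hab.le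
  rw [hcdf]
  refine ⟨hmoment, ?_⟩
  rw [hmoment, add_div, mul_div_cancel_right₀ _ hmass.ne']
end

section
/- (PDF of the skew Student's t distribution as a Gaussian-gamma scale mixture) Let p, q ≥ 1, μ ∈ ℝ^p, Σ a positive definite p×p real matrix, Λ a p×q real matrix, and ν > 0. Define Ω = Σ + ΛΛᵀ, Δ = I_q − ΛᵀΩ^(−1)Λ (positive definite), m(y) = ΛᵀΩ^(−1)(y−μ) and d(y) = (y−μ)ᵀΩ^(−1)(y−μ). Then for every y ∈ ℝ^p, ∫_{t ∈ (0,∞)^q} ∫_{g>0} 2^q · N_p(y | μ + Λt, Σ/g) · N_q(t | 0, I_q/g) · Gamma(g | ν/2, ν/2) dg dt = 2^q · t_p(y | μ, Ω, ν) · T_q( m(y)·√((ν+p)/(ν+d(y))) | 0, Δ, p+ν ). -/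
/-!
Completing the square in `t` (Woodbury), the two Gaussian exponents add up to
`g (d + (m - t)ᵀ Δ⁻¹ (m - t)) / 2` with `Δ⁻¹ = I + ΛᵀΣ⁻¹Λ`, and `det Ω = det Σ · det Δ⁻¹`.
The `g`-integral is then a Gamma integral, whose value factors as
`t_p(y | μ, Ω, ν) · r^q · t_q(r (m - t) | 0, Δ, ν + p)` with `r = √((ν + p)/(ν + d))`.
The substitution `v = r (m - t)` maps the positive orthant onto `{v ≤ r m}`, which turns the
remaining `t`-integral into `T_q(r m | 0, Δ, ν + p)`.
-/

open MeasureTheory Set Matrix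

namespace Matrix

variable {n k : Type*} [Fintype n] [Fintype k]

theorem dotProduct_sub_mulVec_sub {A : Matrix n n ℝ} (hA : A.IsSymm) (u v : n → ℝ) :
    (u - v) ⬝ᵥ (A *ᵥ (u - v)) = u ⬝ᵥ (A *ᵥ u) - 2 * (v ⬝ᵥ (A *ᵥ u)) + v ⬝ᵥ (A *ᵥ v) := by
  have hsymm : u ⬝ᵥ (A *ᵥ v) = v ⬝ᵥ (A *ᵥ u) := by
    rw [← dotProduct_transpose_mulVec, hA.eq]
  simp only [mulVec_sub, dotProduct_sub, sub_dotProduct, hsymm]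
  ring

theorem mulVec_dotProduct_mulVec (L : Matrix n k ℝ) (A : Matrix n n ℝ) (u v : k → ℝ) :
    (L *ᵥ u) ⬝ᵥ (A *ᵥ (L *ᵥ v)) = u ⬝ᵥ ((Lᵀ * A * L) *ᵥ v) := by
  rw [← mulVec_mulVec, ← mulVec_mulVec, dotProduct_transpose_mulVec, dotProduct_comm]

variable {S : Matrix n n ℝ}

namespace PosDef

theorem add_mul_transpose (hS : S.PosDef) (L : Matrix n k ℝ) : (S + L * Lᵀ).PosDef :=
  hS.add_posSemidef (by simpa using posSemidef_conjTranspose_mul_self Lᵀ)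

theorem one_add_transpose_mul_inv_mul [DecidableEq n] [DecidableEq k] (hS : S.PosDef)
    (L : Matrix n k ℝ) : (1 + Lᵀ * S⁻¹ * L).PosDef :=
  PosDef.one.add_posSemidef (by simpa using hS.inv.posSemidef.mul_mul_conjTranspose_same Lᵀ)

theorem inv_one_add_transpose_mul_inv_mul [DecidableEq n] [DecidableEq k] (hS : S.PosDef)
    (L : Matrix n k ℝ) :
    (1 + Lᵀ * S⁻¹ * L)⁻¹ = 1 - Lᵀ * (S + L * Lᵀ)⁻¹ * L := by
  have hSS : S⁻¹⁻¹ = S := nonsing_inv_nonsing_inv S ((isUnit_iff_isUnit_det S).1 hS.isUnit)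
  have h := add_mul_mul_inv_eq_sub 1 Lᵀ S⁻¹ L isUnit_one (isUnit_nonsing_inv_iff.2 hS.isUnit)
    (by simpa [hSS] using (hS.add_mul_transpose L).isUnit)
  simpa [hSS] using h

theorem inv_one_sub_transpose_mul_inv_mul [DecidableEq n] [DecidableEq k] (hS : S.PosDef)
    (L : Matrix n k ℝ) : (1 - Lᵀ * (S + L * Lᵀ)⁻¹ * L)⁻¹ = 1 + Lᵀ * S⁻¹ * L := by
  rw [← hS.inv_one_add_transpose_mul_inv_mul,
    nonsing_inv_nonsing_inv _ (hS.one_add_transpose_mul_inv_mul L).det_pos.ne'.isUnit]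

theorem det_one_sub_transpose_mul_inv_mul [DecidableEq n] [DecidableEq k] (hS : S.PosDef)
    (L : Matrix n k ℝ) : (1 - Lᵀ * (S + L * Lᵀ)⁻¹ * L).det = S.det / (S + L * Lᵀ).det := by
  rw [← hS.inv_one_add_transpose_mul_inv_mul, det_nonsing_inv, Ring.inverse_eq_inv',
    det_add_mul L Lᵀ ((isUnit_iff_isUnit_det S).1 hS.isUnit),
    div_mul_cancel_left₀ hS.det_pos.ne']

theorem dotProduct_inv_mulVec_sub_add_dotProduct_self [DecidableEq n] [DecidableEq k]
    (hS : S.PosDef) (L : Matrix n k ℝ) (e : n → ℝ) (t : k → ℝ) :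
    (e - L *ᵥ t) ⬝ᵥ (S⁻¹ *ᵥ (e - L *ᵥ t)) + t ⬝ᵥ t =
      e ⬝ᵥ ((S + L * Lᵀ)⁻¹ *ᵥ e) + (Lᵀ *ᵥ ((S + L * Lᵀ)⁻¹ *ᵥ e) - t) ⬝ᵥ
        ((1 + Lᵀ * S⁻¹ * L) *ᵥ (Lᵀ *ᵥ ((S + L * Lᵀ)⁻¹ *ᵥ e) - t)) := by
  set Ω := S + L * Lᵀ with hΩ
  set K := 1 + Lᵀ * S⁻¹ * L with hK
  set m := Lᵀ *ᵥ (Ω⁻¹ *ᵥ e)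
  have hSu : IsUnit S.det := (isUnit_iff_isUnit_det S).1 hS.isUnit
  have hΩu : IsUnit Ω.det := (isUnit_iff_isUnit_det Ω).1 (hS.add_mul_transpose L).isUnit
  have hKm : K *ᵥ m = Lᵀ *ᵥ (S⁻¹ *ᵥ e) := by
    have hKL : K * Lᵀ = Lᵀ * S⁻¹ * Ω := by
      simp only [hK, hΩ, Matrix.add_mul, Matrix.mul_add, Matrix.one_mul, Matrix.mul_assoc,
        nonsing_inv_mul S hSu, Matrix.mul_one]
    rw [mulVec_mulVec, mulVec_mulVec, hKL, Matrix.mul_assoc,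
      mul_nonsing_inv Ω hΩu, Matrix.mul_one, mulVec_mulVec]
  have hmKm : m ⬝ᵥ (K *ᵥ m) = e ⬝ᵥ (S⁻¹ *ᵥ e) - e ⬝ᵥ (Ω⁻¹ *ᵥ e) := by
    have hLm : L *ᵥ m = e - S *ᵥ (Ω⁻¹ *ᵥ e) := by
      rw [mulVec_mulVec, show L * Lᵀ = Ω - S by rw [hΩ]; abel, sub_mulVec, mulVec_mulVec,
        mul_nonsing_inv Ω hΩu, one_mulVec]
    have hSt : Sᵀ = S := hS.1
    rw [hKm, dotProduct_transpose_mulVec, hLm, dotProduct_sub, dotProduct_comm (S⁻¹ *ᵥ e),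
      dotProduct_mulVec (S⁻¹ *ᵥ e), ← mulVec_transpose, hSt, mulVec_mulVec,
      mul_nonsing_inv S hSu, one_mulVec]
  have hLt : (L *ᵥ t) ⬝ᵥ (S⁻¹ *ᵥ e) = t ⬝ᵥ (K *ᵥ m) := by
    rw [hKm, dotProduct_transpose_mulVec, dotProduct_comm]
  have hKt : t ⬝ᵥ (K *ᵥ t) = t ⬝ᵥ ((Lᵀ * S⁻¹ * L) *ᵥ t) + t ⬝ᵥ t := by
    rw [hK, add_mulVec, one_mulVec, dotProduct_add, add_comm]
  have hSinv : (S⁻¹).IsSymm := hS.inv.1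
  have hKsymm : K.IsSymm := (hS.one_add_transpose_mul_inv_mul L).1
  rw [dotProduct_sub_mulVec_sub hSinv, dotProduct_sub_mulVec_sub hKsymm,
    mulVec_dotProduct_mulVec, hmKm, hLt, hKt]
  ring

end PosDef

end Matrix

/-- `t_k(x | 0, S, ν)`, as a function of `det S` and `Q = xᵀ S⁻¹ x`. -/
noncomputable def studentDensity (k : ℕ) (ν detS Q : ℝ) : ℝ :=
  Real.Gamma ((ν + k) / 2) /
      ((ν * Real.pi) ^ ((k : ℝ) / 2) * Real.Gamma (ν / 2) * detS ^ ((1 : ℝ) / 2)) *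
    (1 + Q / ν) ^ (-((ν + k) / 2))

theorem integral_gaussian_mul_gaussian_mul_gammaPDF (p q : ℕ) {ν D D' Q₁ Q₂ d w : ℝ}
    (hν : 0 < ν) (hD : 0 < D) (hD' : 0 < D') (hd : 0 ≤ d) (hw : 0 ≤ w) (hQ : Q₁ + Q₂ = d + w) :
    ∫ g in Ioi (0:ℝ), (2:ℝ) ^ q *
        ((g / (2 * Real.pi)) ^ ((p:ℝ) / 2) * D ^ (-(1:ℝ) / 2) * Real.exp (-(g * Q₁) / 2)) *
        ((g / (2 * Real.pi)) ^ ((q:ℝ) / 2) * Real.exp (-(g * Q₂) / 2)) *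
        ((ν / 2) ^ (ν / 2) * g ^ (ν / 2 - 1) * Real.exp (-(ν / 2 * g)) / Real.Gamma (ν / 2)) =
      (2:ℝ) ^ q * studentDensity p ν D' d * Real.sqrt ((ν + p) / (ν + d)) ^ q *
        studentDensity q (p + ν) (D / D') ((ν + p) / (ν + d) * w) := by
  calc _ = ∫ g in Ioi (0:ℝ), (2:ℝ) ^ q * D ^ (-(1:ℝ) / 2) * (ν / 2) ^ (ν / 2) /
          ((2 * Real.pi) ^ (((p:ℝ) + q) / 2) * Real.Gamma (ν / 2)) *
        (g ^ ((ν + p + q) / 2 - 1) * Real.exp (-((ν + (d + w)) / 2 * g))) := by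
        refine setIntegral_congr_fun measurableSet_Ioi fun g (hg : 0 < g) => ?_
        refine Real.log_injOn_pos (mem_Ioi.2 (by positivity)) (mem_Ioi.2 (by positivity)) ?_
        simp (disch := positivity) only [Real.log_mul, Real.log_div, Real.log_rpow,
          Real.log_pow, Real.log_exp]
        linear_combination (-g / 2) * hQ
    _ = _ := by
        -- `Γ((ν + p)/2)` and `D'` cancel between the two Student factors
        have h1 : 1 + d / ν = (ν + d) / ν := by field_simp
        have h2 : 1 + (ν + p) / (ν + d) * w / (p + ν) = (ν + (d + w)) / (ν + d) := by
          field_simp; ring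
        rw [integral_const_mul, Real.integral_rpow_mul_exp_neg_mul_Ioi (by positivity)
          (by positivity), studentDensity, studentDensity, h1, h2,
          ← Real.rpow_natCast (Real.sqrt _)]
        simp only [add_comm (p:ℝ) ν]
        refine Real.log_injOn_pos (mem_Ioi.2 (by positivity)) (mem_Ioi.2 (by positivity)) ?_
        simp (disch := positivity) only [Real.log_mul, Real.log_div, Real.log_rpow, Real.log_pow,
          Real.log_sqrt, Real.log_one]
        ring

theorem setIntegral_Iic_smul_eq {ι : Type*} [Fintype ι] (f : (ι → ℝ) → ℝ) {r : ℝ} (hr : 0 < r)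
    (a : ι → ℝ) :
    ∫ v in Iic (r • a), f v =
      r ^ Fintype.card ι * ∫ t in univ.pi fun _ => Ioi 0, f (r • (a - t)) := by
  have hpi : (univ.pi fun _ : ι => Ioi (0:ℝ)) =ᵐ[volume] Ici 0 := by
    have h := Measure.univ_pi_Ioi_ae_eq_Ici (μ := fun _ : ι => volume) (f := fun _ => (0:ℝ))
    rwa [← volume_pi, ← Pi.zero_def] at h
  have hmem : ∀ t : ι → ℝ, r • a - r • t ∈ Iic (r • a) ↔ t ∈ Ici 0 := fun t => by
    rw [mem_Iic, mem_Ici, sub_le_self_iff, smul_nonneg_iff_nonneg_of_pos_left hr]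
  have hind : ∀ t, (Ici 0).indicator (fun t => f (r • (a - t))) t =
      (Iic (r • a)).indicator f (r • a - r • t) := fun t => by
    by_cases ht : t ∈ Ici 0
    · rw [indicator_of_mem ht, indicator_of_mem ((hmem t).2 ht), smul_sub]
    · rw [indicator_of_notMem ht, indicator_of_notMem (mt (hmem t).1 ht)]
  calc ∫ v in Iic (r • a), f v
      = ∫ u, (Iic (r • a)).indicator f (r • a - u) := by
        rw [integral_sub_left_eq_self, integral_indicator measurableSet_Iic]
    _ = r ^ Fintype.card ι * ∫ t, (Iic (r • a)).indicator f (r • a - r • t) := by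
        rw [Measure.integral_comp_smul_of_nonneg volume
            (fun u => (Iic (r • a)).indicator f (r • a - u)) r (hR := hr.le),
          Module.finrank_fintype_fun_eq_card, smul_eq_mul, mul_inv_cancel_left₀ (by positivity)]
    _ = r ^ Fintype.card ι * ∫ t in univ.pi fun _ => Ioi 0, f (r • (a - t)) := by
        rw [setIntegral_congr_set hpi, ← integral_indicator measurableSet_Ici]
        simp only [hind]

theorem stmt_19_general (p q : ℕ)
    (μ : Fin p → ℝ) (Sg : Matrix (Fin p) (Fin p) ℝ) (hSg : Sg.PosDef)
    (L : Matrix (Fin p) (Fin q) ℝ) (ν : ℝ) (hν : 0 < ν)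
    (y : Fin p → ℝ) :
    let Om := Sg + L * Lᵀ
    let Δ : Matrix (Fin q) (Fin q) ℝ := 1 - Lᵀ * Om⁻¹ * L
    let m : Fin q → ℝ := Lᵀ *ᵥ (Om⁻¹ *ᵥ (y - μ))
    let d : ℝ := (y - μ) ⬝ᵥ (Om⁻¹ *ᵥ (y - μ))
    let gam : ℝ → ℝ → ℝ → ℝ := fun a r g =>
      r ^ a * g ^ (a - 1) * Real.exp (-(r * g)) / Real.Gamma a
    let Np : ℝ → (Fin q → ℝ) → ℝ := fun g t =>
      (g / (2 * Real.pi)) ^ ((p : ℝ) / 2) * Sg.det ^ (-(1 : ℝ) / 2) *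
        Real.exp (-(g * ((y - μ - L *ᵥ t) ⬝ᵥ (Sg⁻¹ *ᵥ (y - μ - L *ᵥ t)))) / 2)
    let Nq : ℝ → (Fin q → ℝ) → ℝ := fun g t =>
      (g / (2 * Real.pi)) ^ ((q : ℝ) / 2) * Real.exp (-(g * (t ⬝ᵥ t)) / 2)
    let tdp : ℝ → (Fin p → ℝ) → ℝ := fun df z =>
      Real.Gamma ((df + p) / 2) /
          ((df * Real.pi) ^ ((p : ℝ) / 2) * Real.Gamma (df / 2) * Om.det ^ ((1 : ℝ) / 2)) *
        (1 + (z ⬝ᵥ (Om⁻¹ *ᵥ z)) / df) ^ (-((df + p) / 2))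
    let tdq : ℝ → (Fin q → ℝ) → ℝ := fun df v =>
      Real.Gamma ((df + q) / 2) /
          ((df * Real.pi) ^ ((q : ℝ) / 2) * Real.Gamma (df / 2) * Δ.det ^ ((1 : ℝ) / 2)) *
        (1 + (v ⬝ᵥ (Δ⁻¹ *ᵥ v)) / df) ^ (-((df + q) / 2))
    let Tq : ℝ → (Fin q → ℝ) → ℝ := fun df z => ∫ v in Iic z, tdq df v
    (∫ t in Set.univ.pi fun _ : Fin q => Ioi (0:ℝ),
        ∫ g in Ioi (0:ℝ), (2:ℝ) ^ q * Np g t * Nq g t * gam (ν / 2) (ν / 2) g) =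
      (2:ℝ) ^ q * tdp ν (y - μ) *
        Tq ((p : ℝ) + ν) (Real.sqrt ((ν + p) / (ν + d)) • m) := by
  intro Om Δ m d gam Np Nq tdp tdq Tq
  set K := 1 + Lᵀ * Sg⁻¹ * L
  set r := Real.sqrt ((ν + p) / (ν + d))
  have hK : K.PosDef := hSg.one_add_transpose_mul_inv_mul L
  have hd : 0 ≤ d := (hSg.add_mul_transpose L).inv.posSemidef.dotProduct_mulVec_nonneg (y - μ)
  have hr : 0 < r := Real.sqrt_pos.2 (by positivity)
  have inner : ∀ t, ∫ g in Ioi (0:ℝ), (2:ℝ) ^ q * Np g t * Nq g t * gam (ν / 2) (ν / 2) g =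
      (2:ℝ) ^ q * tdp ν (y - μ) * r ^ q * tdq (p + ν) (r • (m - t)) := by
    intro t
    have hQ : (y - μ - L *ᵥ t) ⬝ᵥ (Sg⁻¹ *ᵥ (y - μ - L *ᵥ t)) + t ⬝ᵥ t =
        d + (m - t) ⬝ᵥ (K *ᵥ (m - t)) :=
      hSg.dotProduct_inv_mulVec_sub_add_dotProduct_self L (y - μ) t
    have hw : 0 ≤ (m - t) ⬝ᵥ (K *ᵥ (m - t)) := hK.posSemidef.dotProduct_mulVec_nonneg (m - t)
    have htdq : tdq (p + ν) (r • (m - t)) = studentDensity q (p + ν) (Sg.det / Om.det)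
        ((ν + p) / (ν + d) * ((m - t) ⬝ᵥ (K *ᵥ (m - t)))) := by
      show studentDensity q _ Δ.det _ = _
      rw [hSg.det_one_sub_transpose_mul_inv_mul L, hSg.inv_one_sub_transpose_mul_inv_mul L,
        mulVec_smul, dotProduct_smul, smul_dotProduct, smul_eq_mul, smul_eq_mul, ← mul_assoc,
        Real.mul_self_sqrt (by positivity)]
    rw [htdq]
    exact integral_gaussian_mul_gaussian_mul_gammaPDF p q hν hSg.det_pos
      (hSg.add_mul_transpose L).det_pos hd hw hQ
  simp only [inner]
  rw [integral_const_mul, show Tq (p + ν) (r • m) = _ from setIntegral_Iic_smul_eq _ hr m,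
    Fintype.card_fin]
  ring

/-- PDF of the skew Student's t distribution as a Gaussian-gamma scale mixture: with
`Ω = Σ + ΛΛᵀ`, `Δ = I_q − ΛᵀΩ⁻¹Λ`, `m(y) = ΛᵀΩ⁻¹(y−μ)` and `d(y) = (y−μ)ᵀΩ⁻¹(y−μ)`,
`∫_{(0,∞)^q} ∫_{g>0} 2^q·N_p(y|μ+Λt,Σ/g)·N_q(t|0,I_q/g)·Gamma(g|ν/2,ν/2) dg dt
= 2^q·t_p(y|μ,Ω,ν)·T_q(m(y)·√((ν+p)/(ν+d(y)))|0,Δ,p+ν)`. -/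
theorem stmt_19 (p q : ℕ) (hp : 1 ≤ p) (hq : 1 ≤ q)
    (μ : Fin p → ℝ) (Sg : Matrix (Fin p) (Fin p) ℝ) (hSg : Sg.PosDef)
    (L : Matrix (Fin p) (Fin q) ℝ) (ν : ℝ) (hν : 0 < ν)
    (y : Fin p → ℝ) :
    let Om := Sg + L * Lᵀ
    let Δ : Matrix (Fin q) (Fin q) ℝ := 1 - Lᵀ * Om⁻¹ * L
    let m : Fin q → ℝ := Lᵀ *ᵥ (Om⁻¹ *ᵥ (y - μ))
    let d : ℝ := (y - μ) ⬝ᵥ (Om⁻¹ *ᵥ (y - μ))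
    let gam : ℝ → ℝ → ℝ → ℝ := fun a r g =>
      r ^ a * g ^ (a - 1) * Real.exp (-(r * g)) / Real.Gamma a
    let Np : ℝ → (Fin q → ℝ) → ℝ := fun g t =>
      (g / (2 * Real.pi)) ^ ((p : ℝ) / 2) * Sg.det ^ (-(1 : ℝ) / 2) *
        Real.exp (-(g * ((y - μ - L *ᵥ t) ⬝ᵥ (Sg⁻¹ *ᵥ (y - μ - L *ᵥ t)))) / 2)
    let Nq : ℝ → (Fin q → ℝ) → ℝ := fun g t =>
      (g / (2 * Real.pi)) ^ ((q : ℝ) / 2) * Real.exp (-(g * (t ⬝ᵥ t)) / 2)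
    let tdp : ℝ → (Fin p → ℝ) → ℝ := fun df z =>
      Real.Gamma ((df + p) / 2) /
          ((df * Real.pi) ^ ((p : ℝ) / 2) * Real.Gamma (df / 2) * Om.det ^ ((1 : ℝ) / 2)) *
        (1 + (z ⬝ᵥ (Om⁻¹ *ᵥ z)) / df) ^ (-((df + p) / 2))
    let tdq : ℝ → (Fin q → ℝ) → ℝ := fun df v =>
      Real.Gamma ((df + q) / 2) /
          ((df * Real.pi) ^ ((q : ℝ) / 2) * Real.Gamma (df / 2) * Δ.det ^ ((1 : ℝ) / 2)) *
        (1 + (v ⬝ᵥ (Δ⁻¹ *ᵥ v)) / df) ^ (-((df + q) / 2))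
    let Tq : ℝ → (Fin q → ℝ) → ℝ := fun df z => ∫ v in Iic z, tdq df v
    (∫ t in Set.univ.pi fun _ : Fin q => Ioi (0:ℝ),
        ∫ g in Ioi (0:ℝ), (2:ℝ) ^ q * Np g t * Nq g t * gam (ν / 2) (ν / 2) g) =
      (2:ℝ) ^ q * tdp ν (y - μ) *
        Tq ((p : ℝ) + ν) (Real.sqrt ((ν + p) / (ν + d)) • m) :=
  stmt_19_general p q μ Sg hSg L ν hν y
end
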